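/- Let S ⊆ B(H) and T ⊆ B(K) be operator systems and let X ⊆ B(H,K) be a non-degenerate operator space with X* T X ⊆ closure(S) and X S X* ⊆ closure(T). Let A be the C*-algebra generated by X* X and let M be the closed linear span of X A. Then M is a closed TRO (M M* M ⊆ M), M is non-degenerate, M* T M ⊆ closure(S), and M S M* ⊆ closure(T); in particular S and T are TRO-equivalent via M. -/

import Mathlib

open ContinuousLinearMap

/-- The set of products `a ∘L b` with `a ∈ A`, `b ∈ B`. -/
def opMulSet {H K L : Type*} [NormedAddCommGroup H] [NormedSpace ℂ H]
    [NormedAddCommGroup K] [NormedSpace ℂ K] [NormedAddCommGroup L] [NormedSpace ℂ L]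
    (A : Set (K →L[ℂ] L)) (B : Set (H →L[ℂ] K)) : Set (H →L[ℂ] L) :=
  {x | ∃ a ∈ A, ∃ b ∈ B, x = a ∘L b}

/-- The set of adjoints of elements of `M`. -/
noncomputable def opAdjSet {H K : Type*}
    [NormedAddCommGroup H] [InnerProductSpace ℂ H] [CompleteSpace H]
    [NormedAddCommGroup K] [InnerProductSpace ℂ K] [CompleteSpace K]
    (M : Set (H →L[ℂ] K)) : Set (K →L[ℂ] H) :=
  {x | ∃ m ∈ M, x = adjoint m}

/-- Closed linear span. -/
def cSpan {E : Type*} [NormedAddCommGroup E] [NormedSpace ℂ E] (s : Set E) : Set E :=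
  closure ((Submodule.span ℂ s : Submodule ℂ E) : Set E)

/-! The closure `S̄` of `S` is stable under multiplication by `A` on both sides. For a generator
`x₁* x₂` of `A`, approximating `1` by sums of `y* y'` (non-degeneracy of `X`) writes `s x₁* x₂` as
a limit of sums of `y* (y' s x₁*) x₂ ∈ X* T̄ X ⊆ S̄`, and symmetrically on the left; the two-sided
multipliers of `S̄` form a closed subalgebra, and since `X* X` is self-adjoint it contains `A`.
All claims about `M = [X A]` then reduce, by continuity and (conjugate-)linearity, to generators:
`(x₁a₁)(x₂a₂)*(x₃a₃) = x₁ (a₁ a₂* x₂* x₃ a₃) ∈ X A`, `(x a)* t (x' a') = a* (x* t x') a' ∈ S̄` and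
`(x a) s (x' a')* = x (a s a'*) x'* ∈ X S̄ X* ⊆ T̄`. Finally `1 ∈ A` gives `X ⊆ M`, so `M`
inherits non-degeneracy from `X`. -/

section ClosedSpan

variable {E F G : Type*} [NormedAddCommGroup E] [NormedSpace ℂ E]
  [NormedAddCommGroup F] [NormedSpace ℂ F] [NormedAddCommGroup G] [NormedSpace ℂ G]

lemma subset_cSpan (s : Set E) : s ⊆ cSpan s :=
  Submodule.subset_span.trans subset_closure

lemma cSpan_mono {s t : Set E} (h : s ⊆ t) : cSpan s ⊆ cSpan t :=
  closure_mono (Submodule.span_mono h)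

lemma cSpan_subset {s : Set E} {C : Submodule ℂ E} (hC : IsClosed (C : Set E))
    (h : s ⊆ C) : cSpan s ⊆ C :=
  closure_minimal (Submodule.span_le.mpr h) hC

lemma cSpan_subset_cSpan {s t : Set E} (h : s ⊆ cSpan t) : cSpan s ⊆ cSpan t :=
  cSpan_subset (C := (Submodule.span ℂ t).topologicalClosure) isClosed_closure h

lemma cSpan_coe_submodule (C : Submodule ℂ E) : cSpan (C : Set E) = closure C := by
  rw [cSpan, Submodule.span_eq]

lemma map_mem_of_mem_cSpan {σ : ℂ →+* ℂ} (f : E →ₛₗ[σ] F) (hf : Continuous f)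
    {C : Submodule ℂ F} (hC : IsClosed (C : Set F)) {s : Set E} (h : ∀ x ∈ s, f x ∈ C)
    {x : E} (hx : x ∈ cSpan s) : f x ∈ C :=
  cSpan_subset (C := C.comap f) (hC.preimage hf) h hx

lemma map₂_mem_of_mem_cSpan (B : E →L[ℂ] F →L[ℂ] G) {C : Submodule ℂ G}
    (hC : IsClosed (C : Set G)) {s : Set E} {t : Set F} (h : ∀ x ∈ s, ∀ y ∈ t, B x y ∈ C)
    {x : E} (hx : x ∈ cSpan s) {y : F} (hy : y ∈ cSpan t) : B x y ∈ C :=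
  map_mem_of_mem_cSpan (B.flip y : E →ₗ[ℂ] G) (B.flip y).continuous hC
    (fun x' hx' => map_mem_of_mem_cSpan (B x' : F →ₗ[ℂ] G) (B x').continuous hC (h x' hx') hy) hx

end ClosedSpan

section Products

variable {E₁ E₂ E₃ E₄ : Type*} [NormedAddCommGroup E₁] [NormedSpace ℂ E₁]
  [NormedAddCommGroup E₂] [NormedSpace ℂ E₂] [NormedAddCommGroup E₃] [NormedSpace ℂ E₃]
  [NormedAddCommGroup E₄] [NormedSpace ℂ E₄]

lemma opMulSet_mono {U U' : Set (E₂ →L[ℂ] E₃)} {V V' : Set (E₁ →L[ℂ] E₂)} (hU : U ⊆ U')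
    (hV : V ⊆ V') : opMulSet U V ⊆ opMulSet U' V' := by
  rintro _ ⟨u, hu, v, hv, rfl⟩
  exact ⟨u, hU hu, v, hV hv, rfl⟩

lemma comp_mem_cSpan {U : Set (E₂ →L[ℂ] E₃)} {V : Set (E₁ →L[ℂ] E₂)} {a : E₂ →L[ℂ] E₃}
    {b : E₁ →L[ℂ] E₂} (ha : a ∈ cSpan U) (hb : b ∈ cSpan V) : a ∘L b ∈ cSpan (opMulSet U V) :=
  map₂_mem_of_mem_cSpan (compL ℂ E₁ E₂ E₃) (C := (Submodule.span ℂ _).topologicalClosure)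
    isClosed_closure (fun u hu v hv => subset_cSpan (opMulSet U V) ⟨u, hu, v, hv, rfl⟩) ha hb

lemma comp_comp_mem_cSpan {U : Set (E₃ →L[ℂ] E₄)} {V : Set (E₂ →L[ℂ] E₃)}
    {W : Set (E₁ →L[ℂ] E₂)} {a : E₃ →L[ℂ] E₄} {b : E₂ →L[ℂ] E₃} {c : E₁ →L[ℂ] E₂}
    (ha : a ∈ cSpan U) (hb : b ∈ cSpan V) (hc : c ∈ cSpan W) :
    a ∘L b ∘L c ∈ cSpan (opMulSet U (opMulSet V W)) :=
  comp_mem_cSpan ha (comp_mem_cSpan hb hc)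

lemma mem_of_forall_comp_mem_right {U : Set (E₁ →L[ℂ] E₁)} (hU : (1 : E₁ →L[ℂ] E₁) ∈ cSpan U)
    {C : Submodule ℂ (E₁ →L[ℂ] E₂)} (hC : IsClosed (C : Set (E₁ →L[ℂ] E₂)))
    {z : E₁ →L[ℂ] E₂} (h : ∀ u ∈ U, z ∘L u ∈ C) : z ∈ C :=
  map_mem_of_mem_cSpan (compL ℂ E₁ E₁ E₂ z : (E₁ →L[ℂ] E₁) →ₗ[ℂ] (E₁ →L[ℂ] E₂))
    (compL ℂ E₁ E₁ E₂ z).continuous hC h hU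

lemma mem_of_forall_comp_mem_left {U : Set (E₂ →L[ℂ] E₂)} (hU : (1 : E₂ →L[ℂ] E₂) ∈ cSpan U)
    {C : Submodule ℂ (E₁ →L[ℂ] E₂)} (hC : IsClosed (C : Set (E₁ →L[ℂ] E₂)))
    {z : E₁ →L[ℂ] E₂} (h : ∀ u ∈ U, u ∘L z ∈ C) : z ∈ C :=
  map_mem_of_mem_cSpan ((compL ℂ E₁ E₂ E₂).flip z : (E₂ →L[ℂ] E₂) →ₗ[ℂ] (E₁ →L[ℂ] E₂))
    ((compL ℂ E₁ E₂ E₂).flip z).continuous hC h hU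

lemma subset_cSpan_opMulSet {X : Set (E₁ →L[ℂ] E₂)} {A : Set (E₁ →L[ℂ] E₁)}
    (hA : (1 : E₁ →L[ℂ] E₁) ∈ A) : X ⊆ cSpan (opMulSet X A) :=
  fun x hx => subset_cSpan _ ⟨x, hx, 1, hA, rfl⟩

lemma comp_comp_mem_closure {U : Set (E₃ →L[ℂ] E₄)} {V : Submodule ℂ (E₂ →L[ℂ] E₃)}
    {W : Set (E₁ →L[ℂ] E₂)} {C : Submodule ℂ (E₁ →L[ℂ] E₄)}
    (h : opMulSet U (opMulSet (V : Set (E₂ →L[ℂ] E₃)) W) ⊆ closure C) {a : E₃ →L[ℂ] E₄}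
    {b : E₂ →L[ℂ] E₃} {c : E₁ →L[ℂ] E₂} (ha : a ∈ U) (hb : b ∈ closure (V : Set (E₂ →L[ℂ] E₃)))
    (hc : c ∈ W) : a ∘L b ∘L c ∈ closure (C : Set (E₁ →L[ℂ] E₄)) :=
  cSpan_subset (C := C.topologicalClosure) C.isClosed_topologicalClosure h <|
    comp_comp_mem_cSpan (subset_cSpan _ ha) (by rwa [cSpan_coe_submodule]) (subset_cSpan _ hc)

end Products

section Adjoints

variable {H K : Type*} [NormedAddCommGroup H] [InnerProductSpace ℂ H] [CompleteSpace H]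
  [NormedAddCommGroup K] [InnerProductSpace ℂ K] [CompleteSpace K]

lemma opAdjSet_mono {M M' : Set (H →L[ℂ] K)} (h : M ⊆ M') : opAdjSet M ⊆ opAdjSet M' := by
  rintro _ ⟨m, hm, rfl⟩
  exact ⟨m, h hm, rfl⟩

lemma adjoint_mem_cSpan {U : Set (H →L[ℂ] K)} {m : H →L[ℂ] K} (hm : m ∈ cSpan U) :
    adjoint m ∈ cSpan (opAdjSet U) :=
  map_mem_of_mem_cSpan (adjoint : (H →L[ℂ] K) ≃ₗᵢ⋆[ℂ] (K →L[ℂ] H)).toLinearEquiv.toLinearMap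
    adjoint.continuous (C := (Submodule.span ℂ _).topologicalClosure) isClosed_closure
    (fun u hu => subset_cSpan (opAdjSet U) ⟨u, hu, rfl⟩) hm

end Adjoints

section Multipliers

variable {R E : Type*} [CommSemiring R] [NonUnitalSemiring E] [Module R E]
  [IsScalarTower R E E] [SMulCommClass R E E]

def Submodule.multiplierSubalgebra (C : Submodule R E) : NonUnitalSubalgebra R E where
  carrier := {a | ∀ c ∈ C, a * c ∈ C ∧ c * a ∈ C}
  add_mem' {a b} ha hb c hc := by
    rw [add_mul, mul_add]
    exact ⟨C.add_mem (ha c hc).1 (hb c hc).1, C.add_mem (ha c hc).2 (hb c hc).2⟩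
  zero_mem' c _ := by simp only [zero_mul, mul_zero, C.zero_mem, and_self]
  mul_mem' {a b} ha hb c hc := by
    rw [mul_assoc, ← mul_assoc c]
    exact ⟨(ha _ (hb c hc).1).1, (hb _ (ha c hc).2).2⟩
  smul_mem' r a ha c hc := by
    rw [smul_mul_assoc, mul_smul_comm]
    exact ⟨C.smul_mem r (ha c hc).1, C.smul_mem r (ha c hc).2⟩

lemma Submodule.isClosed_multiplierSubalgebra [TopologicalSpace E] [ContinuousMul E]
    {C : Submodule R E} (hC : IsClosed (C : Set E)) :
    IsClosed (C.multiplierSubalgebra : Set E) := by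
  show IsClosed {a | ∀ c ∈ C, a * c ∈ C ∧ c * a ∈ C}
  simp only [Set.ofPred_forall, Set.ofPred_and]
  exact isClosed_iInter fun c => isClosed_iInter fun _ =>
    (hC.preimage (continuous_mul_const c)).inter (hC.preimage (continuous_const_mul c))

lemma NonUnitalStarAlgebra.adjoin_le_of_star_subset [StarRing R] [StarRing E] [StarModule R E]
    {s : Set E} (hs : star s ⊆ s) {P : NonUnitalSubalgebra R E} (hP : s ⊆ P) :
    (adjoin R s : Set E) ⊆ P :=
  NonUnitalAlgebra.adjoin_le (R := R) (Set.union_subset hP (hs.trans hP))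

end Multipliers

section OperatorSpace

variable {H K : Type*} [NormedAddCommGroup H] [InnerProductSpace ℂ H] [CompleteSpace H]
  [NormedAddCommGroup K] [InnerProductSpace ℂ K] [CompleteSpace K] {X : Set (H →L[ℂ] K)}

lemma cSpan_subset_closure_adjoin (s : Set (H →L[ℂ] H)) :
    cSpan s ⊆ closure (NonUnitalStarAlgebra.adjoin ℂ s : Set (H →L[ℂ] H)) :=
  closure_mono <| Submodule.span_le
    (p := (NonUnitalStarAlgebra.adjoin ℂ s).toNonUnitalSubalgebra.toSubmodule).mpr
    (NonUnitalStarAlgebra.subset_adjoin ℂ s)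

lemma star_opMulSet_opAdjSet_subset :
    star (opMulSet (opAdjSet X) X) ⊆ opMulSet (opAdjSet X) X := by
  rintro u ⟨_, ⟨x, hx, rfl⟩, x', hx', hu⟩
  refine ⟨adjoint x', ⟨x', hx', rfl⟩, x, hx, ?_⟩
  rw [← star_star u, hu, star_eq_adjoint, adjoint_comp, adjoint_adjoint]

lemma opMulSet_opAdjSet_subset_multiplierSubalgebra {S : Submodule ℂ (H →L[ℂ] H)}
    {T : Submodule ℂ (K →L[ℂ] K)} (hS : IsClosed (S : Set (H →L[ℂ] H)))
    (hX : (1 : H →L[ℂ] H) ∈ cSpan (opMulSet (opAdjSet X) X))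
    (hXTX : ∀ x ∈ X, ∀ t ∈ T, ∀ x' ∈ X, adjoint x ∘L t ∘L x' ∈ S)
    (hXSX : ∀ x ∈ X, ∀ s ∈ S, ∀ x' ∈ X, x ∘L s ∘L adjoint x' ∈ T) :
    opMulSet (opAdjSet X) X ⊆ S.multiplierSubalgebra := by
  rintro _ ⟨_, ⟨x₁, hx₁, rfl⟩, x₂, hx₂, rfl⟩ s hs
  refine ⟨mem_of_forall_comp_mem_right hX hS ?_, mem_of_forall_comp_mem_left hX hS ?_⟩
  · rintro _ ⟨_, ⟨y, hy, rfl⟩, y', hy', rfl⟩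
    exact hXTX x₁ hx₁ _ (hXSX x₂ hx₂ s hs y hy) y' hy'
  · rintro _ ⟨_, ⟨y, hy, rfl⟩, y', hy', rfl⟩
    exact hXTX y hy _ (hXSX y' hy' s hs x₁ hx₁) x₂ hx₂

lemma closure_adjoin_subset_multiplierSubalgebra {S : Submodule ℂ (H →L[ℂ] H)}
    {T : Submodule ℂ (K →L[ℂ] K)} (hS : IsClosed (S : Set (H →L[ℂ] H)))
    (hX : (1 : H →L[ℂ] H) ∈ cSpan (opMulSet (opAdjSet X) X))
    (hXTX : ∀ x ∈ X, ∀ t ∈ T, ∀ x' ∈ X, adjoint x ∘L t ∘L x' ∈ S)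
    (hXSX : ∀ x ∈ X, ∀ s ∈ S, ∀ x' ∈ X, x ∘L s ∘L adjoint x' ∈ T) :
    closure (NonUnitalStarAlgebra.adjoin ℂ (opMulSet (opAdjSet X) X) : Set (H →L[ℂ] H)) ⊆
      S.multiplierSubalgebra :=
  closure_minimal (NonUnitalStarAlgebra.adjoin_le_of_star_subset
      (star_opMulSet_opAdjSet_subset (X := X))
      (opMulSet_opAdjSet_subset_multiplierSubalgebra hS hX hXTX hXSX))
    (Submodule.isClosed_multiplierSubalgebra hS)

end OperatorSpace

section TernaryEnvelope

variable {H K : Type*} [NormedAddCommGroup H] [InnerProductSpace ℂ H] [CompleteSpace H]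
  [NormedAddCommGroup K] [InnerProductSpace ℂ K] [CompleteSpace K] {X : Set (H →L[ℂ] K)}
  {A : NonUnitalStarSubalgebra ℂ (H →L[ℂ] H)}

lemma comp_adjoint_comp_mem_cSpan_opMulSet (hXA : opMulSet (opAdjSet X) X ⊆ A)
    {a b c : H →L[ℂ] K} (ha : a ∈ cSpan (opMulSet X A)) (hb : b ∈ cSpan (opMulSet X A))
    (hc : c ∈ cSpan (opMulSet X A)) : a ∘L adjoint b ∘L c ∈ cSpan (opMulSet X A) := by
  refine cSpan_subset_cSpan ?_ (comp_comp_mem_cSpan ha (adjoint_mem_cSpan hb) hc)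
  rintro _ ⟨_, ⟨x, hx, a₁, ha₁, rfl⟩, _, ⟨_, ⟨_, ⟨x', hx', a₂, ha₂, rfl⟩, rfl⟩, _,
    ⟨x'', hx'', a₃, ha₃, rfl⟩, rfl⟩, rfl⟩
  have hx'x'' : adjoint x' ∘L x'' ∈ A := hXA ⟨_, ⟨x', hx', rfl⟩, x'', hx'', rfl⟩
  refine subset_cSpan _ ⟨x, hx, a₁ * (star a₂ * ((adjoint x' ∘L x'') * a₃)),
    mul_mem ha₁ (mul_mem (star_mem ha₂) (mul_mem hx'x'' ha₃)), ?_⟩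
  rw [adjoint_comp, star_eq_adjoint]
  rfl

lemma adjoint_comp_comp_mem_of_mem_cSpan_opMulSet {S : Submodule ℂ (H →L[ℂ] H)}
    {T : Set (K →L[ℂ] K)} (hS : IsClosed (S : Set (H →L[ℂ] H)))
    (hA : (A : Set (H →L[ℂ] H)) ⊆ S.multiplierSubalgebra)
    (hXTX : ∀ x ∈ X, ∀ t ∈ T, ∀ x' ∈ X, adjoint x ∘L t ∘L x' ∈ S)
    {m m' : H →L[ℂ] K} (hm : m ∈ cSpan (opMulSet X A)) {t : K →L[ℂ] K} (ht : t ∈ T)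
    (hm' : m' ∈ cSpan (opMulSet X A)) : adjoint m ∘L t ∘L m' ∈ S := by
  refine cSpan_subset hS ?_ (comp_comp_mem_cSpan (adjoint_mem_cSpan hm) (subset_cSpan _ ht) hm')
  rintro _ ⟨_, ⟨_, ⟨x, hx, a, ha, rfl⟩, rfl⟩, _, ⟨t, ht, _, ⟨x', hx', a', ha', rfl⟩, rfl⟩, rfl⟩
  have h := (hA (star_mem ha) _ (hA ha' _ (hXTX x hx t ht x' hx')).2).1
  rw [star_eq_adjoint] at h
  simpa only [adjoint_comp, mul_def, comp_assoc, SetLike.mem_coe] using h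

lemma comp_comp_adjoint_mem_of_mem_cSpan_opMulSet {S : Submodule ℂ (H →L[ℂ] H)}
    {T : Submodule ℂ (K →L[ℂ] K)} (hT : IsClosed (T : Set (K →L[ℂ] K)))
    (hA : (A : Set (H →L[ℂ] H)) ⊆ S.multiplierSubalgebra)
    (hXSX : ∀ x ∈ X, ∀ s ∈ S, ∀ x' ∈ X, x ∘L s ∘L adjoint x' ∈ T)
    {m m' : H →L[ℂ] K} (hm : m ∈ cSpan (opMulSet X A)) {s : H →L[ℂ] H} (hs : s ∈ S)
    (hm' : m' ∈ cSpan (opMulSet X A)) : m ∘L s ∘L adjoint m' ∈ T := by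
  refine cSpan_subset hT ?_ (comp_comp_mem_cSpan hm (subset_cSpan _ hs) (adjoint_mem_cSpan hm'))
  rintro _ ⟨_, ⟨x, hx, a, ha, rfl⟩, _, ⟨s, hs, _, ⟨_, ⟨x', hx', a', ha', rfl⟩, rfl⟩, rfl⟩, rfl⟩
  have h := hXSX x hx _ (hA ha _ (hA (star_mem ha') s hs).2).1 x' hx'
  rw [star_eq_adjoint] at h
  simpa only [adjoint_comp, mul_def, comp_assoc, SetLike.mem_coe] using h

end TernaryEnvelope

theorem stmt_3_general {H K : Type*} [NormedAddCommGroup H] [InnerProductSpace ℂ H] [CompleteSpace H]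
    [NormedAddCommGroup K] [InnerProductSpace ℂ K] [CompleteSpace K]
    (S : Submodule ℂ (H →L[ℂ] H))
    (T : Submodule ℂ (K →L[ℂ] K))
    (X : Submodule ℂ (H →L[ℂ] K))
    (hXnd1 : (1 : H →L[ℂ] H) ∈
      cSpan (opMulSet (opAdjSet (X : Set (H →L[ℂ] K))) (X : Set (H →L[ℂ] K))))
    (hXnd2 : (1 : K →L[ℂ] K) ∈
      cSpan (opMulSet (X : Set (H →L[ℂ] K)) (opAdjSet (X : Set (H →L[ℂ] K)))))
    (hXTX : opMulSet (opAdjSet (X : Set (H →L[ℂ] K)))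
        (opMulSet (T : Set (K →L[ℂ] K)) (X : Set (H →L[ℂ] K)))
      ⊆ closure (S : Set (H →L[ℂ] H)))
    (hXSX : opMulSet (X : Set (H →L[ℂ] K))
        (opMulSet (S : Set (H →L[ℂ] H)) (opAdjSet (X : Set (H →L[ℂ] K))))
      ⊆ closure (T : Set (K →L[ℂ] K)))
    (A : Set (H →L[ℂ] H))
    (hA : A = closure ((NonUnitalStarAlgebra.adjoin ℂ
        (opMulSet (opAdjSet (X : Set (H →L[ℂ] K))) (X : Set (H →L[ℂ] K))) :
        NonUnitalStarSubalgebra ℂ (H →L[ℂ] H)) : Set (H →L[ℂ] H)))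
    (M : Set (H →L[ℂ] K))
    (hM : M = cSpan (opMulSet (X : Set (H →L[ℂ] K)) A)) :
    IsClosed M ∧
    (∀ a ∈ M, ∀ b ∈ M, ∀ c ∈ M, a ∘L adjoint b ∘L c ∈ M) ∧
    (1 : H →L[ℂ] H) ∈ cSpan (opMulSet (opAdjSet M) M) ∧
    (1 : K →L[ℂ] K) ∈ cSpan (opMulSet M (opAdjSet M)) ∧
    opMulSet (opAdjSet M) (opMulSet (T : Set (K →L[ℂ] K)) M)
      ⊆ closure (S : Set (H →L[ℂ] H)) ∧
    opMulSet M (opMulSet (S : Set (H →L[ℂ] H)) (opAdjSet M))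
      ⊆ closure (T : Set (K →L[ℂ] K)) := by
  obtain ⟨A, rfl⟩ : ∃ A' : NonUnitalStarSubalgebra ℂ (H →L[ℂ] H), (A' : Set (H →L[ℂ] H)) = A :=
    ⟨(NonUnitalStarAlgebra.adjoin ℂ _).topologicalClosure, hA.symm⟩
  subst hM
  have hXTX' : ∀ x ∈ X, ∀ t ∈ T.topologicalClosure, ∀ x' ∈ X,
      adjoint x ∘L t ∘L x' ∈ S.topologicalClosure :=
    fun x hx t ht x' hx' => comp_comp_mem_closure hXTX ⟨x, hx, rfl⟩ ht hx'
  have hXSX' : ∀ x ∈ X, ∀ s ∈ S.topologicalClosure, ∀ x' ∈ X,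
      x ∘L s ∘L adjoint x' ∈ T.topologicalClosure :=
    fun x hx s hs x' hx' => comp_comp_mem_closure hXSX hx hs ⟨x', hx', rfl⟩
  have hAS : (A : Set (H →L[ℂ] H)) ⊆ S.topologicalClosure.multiplierSubalgebra :=
    hA ▸ closure_adjoin_subset_multiplierSubalgebra S.isClosed_topologicalClosure hXnd1 hXTX' hXSX'
  have hXXA : opMulSet (opAdjSet (X : Set (H →L[ℂ] K))) X ⊆ (A : Set (H →L[ℂ] H)) :=
    hA ▸ (NonUnitalStarAlgebra.subset_adjoin ℂ _).trans subset_closure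
  have hA1 : (1 : H →L[ℂ] H) ∈ (A : Set (H →L[ℂ] H)) :=
    hA ▸ cSpan_subset_closure_adjoin _ hXnd1
  have hXM : (X : Set (H →L[ℂ] K)) ⊆ cSpan (opMulSet (X : Set (H →L[ℂ] K)) A) :=
    subset_cSpan_opMulSet hA1
  refine ⟨isClosed_closure,
    fun a ha b hb c hc => comp_adjoint_comp_mem_cSpan_opMulSet hXXA ha hb hc,
    cSpan_mono (opMulSet_mono (opAdjSet_mono hXM) hXM) hXnd1,
    cSpan_mono (opMulSet_mono hXM (opAdjSet_mono hXM)) hXnd2, ?_, ?_⟩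
  · rintro _ ⟨_, ⟨m, hm, rfl⟩, _, ⟨t, ht, m', hm', rfl⟩, rfl⟩
    exact adjoint_comp_comp_mem_of_mem_cSpan_opMulSet S.isClosed_topologicalClosure hAS
      (fun x hx t ht x' hx' => hXTX ⟨_, ⟨x, hx, rfl⟩, _, ⟨t, ht, x', hx', rfl⟩, rfl⟩) hm ht hm'
  · rintro _ ⟨m, hm, _, ⟨s, hs, _, ⟨m', hm', rfl⟩, rfl⟩, rfl⟩
    exact comp_comp_adjoint_mem_of_mem_cSpan_opMulSet T.isClosed_topologicalClosure hAS hXSX' hm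
      (subset_closure hs) hm'

/-- If `X` is a non-degenerate operator space with `X* T X ⊆ closure S` and
`X S X* ⊆ closure T`, and `A = C*(X* X)`, `M = [X A]`, then `M` is a closed
non-degenerate TRO implementing a TRO-equivalence of `S` and `T`. -/
theorem stmt_3 {H K : Type*} [NormedAddCommGroup H] [InnerProductSpace ℂ H] [CompleteSpace H]
    [NormedAddCommGroup K] [InnerProductSpace ℂ K] [CompleteSpace K]
    (S : Submodule ℂ (H →L[ℂ] H)) (hS1 : (1 : H →L[ℂ] H) ∈ S)
    (hSstar : ∀ s ∈ S, adjoint s ∈ S)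
    (T : Submodule ℂ (K →L[ℂ] K)) (hT1 : (1 : K →L[ℂ] K) ∈ T)
    (hTstar : ∀ t ∈ T, adjoint t ∈ T)
    (X : Submodule ℂ (H →L[ℂ] K))
    (hXnd1 : (1 : H →L[ℂ] H) ∈
      cSpan (opMulSet (opAdjSet (X : Set (H →L[ℂ] K))) (X : Set (H →L[ℂ] K))))
    (hXnd2 : (1 : K →L[ℂ] K) ∈
      cSpan (opMulSet (X : Set (H →L[ℂ] K)) (opAdjSet (X : Set (H →L[ℂ] K)))))
    (hXTX : opMulSet (opAdjSet (X : Set (H →L[ℂ] K)))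
        (opMulSet (T : Set (K →L[ℂ] K)) (X : Set (H →L[ℂ] K)))
      ⊆ closure (S : Set (H →L[ℂ] H)))
    (hXSX : opMulSet (X : Set (H →L[ℂ] K))
        (opMulSet (S : Set (H →L[ℂ] H)) (opAdjSet (X : Set (H →L[ℂ] K))))
      ⊆ closure (T : Set (K →L[ℂ] K)))
    (A : Set (H →L[ℂ] H))
    (hA : A = closure ((NonUnitalStarAlgebra.adjoin ℂ
        (opMulSet (opAdjSet (X : Set (H →L[ℂ] K))) (X : Set (H →L[ℂ] K))) :
        NonUnitalStarSubalgebra ℂ (H →L[ℂ] H)) : Set (H →L[ℂ] H)))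
    (M : Set (H →L[ℂ] K))
    (hM : M = cSpan (opMulSet (X : Set (H →L[ℂ] K)) A)) :
    IsClosed M ∧
    (∀ a ∈ M, ∀ b ∈ M, ∀ c ∈ M, a ∘L adjoint b ∘L c ∈ M) ∧
    (1 : H →L[ℂ] H) ∈ cSpan (opMulSet (opAdjSet M) M) ∧
    (1 : K →L[ℂ] K) ∈ cSpan (opMulSet M (opAdjSet M)) ∧
    opMulSet (opAdjSet M) (opMulSet (T : Set (K →L[ℂ] K)) M)
      ⊆ closure (S : Set (H →L[ℂ] H)) ∧
    opMulSet M (opMulSet (S : Set (H →L[ℂ] H)) (opAdjSet M))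
      ⊆ closure (T : Set (K →L[ℂ] K)) :=
  stmt_3_general S T X hXnd1 hXnd2 hXTX hXSX A hA M hM
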